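/- Let R be a commutative ring, I an ideal of R, S ⊆ R a subring, and h ∈ S such that the inclusion S ↪ R is an analytic isomorphism along h. Then the inclusion S[It, t⁻¹] ↪ R[It, t⁻¹] of extended Rees algebras is an analytic isomorphism along h; that is: h is a non-zero-divisor of S[It, t⁻¹], h is a non-zero-divisor of R[It, t⁻¹], and the induced ring homomorphism S[It, t⁻¹]/(h·S[It, t⁻¹]) → R[It, t⁻¹]/(h·R[It, t⁻¹]) is bijective. -/

import Mathlib

/-- A ring homomorphism `f : B → A` is an analytic isomorphism along `h ∈ B` if `h` is a
non-zero-divisor of `B`, `f h` is a non-zero-divisor of `A`, and the induced map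
`B/hB → A/(f h)A` is bijective. -/
def IsAnalyticIsoAlong {B A : Type*} [CommRing B] [CommRing A] (f : B →+* A) (h : B) : Prop :=
  h ∈ nonZeroDivisors B ∧ f h ∈ nonZeroDivisors A ∧
    Function.Bijective (Ideal.quotientMap (Ideal.span {f h}) f
      ((Ideal.span_singleton_le_iff_mem _).mpr (Ideal.mem_comap.mpr (Ideal.subset_span rfl))))

/-!
Everything is checked coefficientwise. Since `h` is a non-zero-divisor of `R`, the constant `h`
is one in `R[t,t⁻¹]`, hence in every subring containing it. Bijectivity of `S/hS → R/hR` says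
`hR ∩ S = hS` and `R = S + hR`. The first shows that if `x ∈ S[It,t⁻¹]` equals `h·c` with
`c ∈ R[It,t⁻¹]`, then `c ∈ S[It,t⁻¹]`. The second, applied to the coefficients of degree `≤ 0`,
writes every `p ∈ R[It,t⁻¹]` as `q + h·r` with `q ∈ S[It,t⁻¹]`, `r ∈ R[It,t⁻¹]`; in positive
degrees the two algebras impose the same condition, so nothing needs splitting there.
-/

open LaurentPolynomial
open scoped nonZeroDivisors

section IsAnalyticIsoAlong

variable {B A : Type*} [CommRing B] [CommRing A] {f : B →+* A} {h : B}

theorem isAnalyticIsoAlong_iff :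
    IsAnalyticIsoAlong f h ↔ h ∈ B⁰ ∧ f h ∈ A⁰ ∧
      (∀ b, f h ∣ f b → h ∣ b) ∧ ∀ a, ∃ b, f h ∣ a - f b := by
  refine and_congr_right' (and_congr_right' (and_congr ⟨fun hinj b hb ↦ ?_, fun hdvd ↦ ?_⟩
    ⟨fun hsurj a ↦ ?_, fun hdvd y ↦ ?_⟩))
  · rw [← Ideal.Quotient.eq_zero_iff_dvd] at hb ⊢
    exact hinj (by rwa [Ideal.quotientMap_mk, map_zero])
  · exact Ideal.quotientMap_injective' fun b hb ↦
      Ideal.mem_span_singleton.mpr (hdvd b (Ideal.mem_span_singleton.mp hb))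
  · obtain ⟨c, hc⟩ := hsurj (Ideal.Quotient.mk _ a)
    obtain ⟨b, rfl⟩ := Ideal.Quotient.mk_surjective c
    exact ⟨b, Ideal.mem_span_singleton.mp (Ideal.Quotient.eq.mp hc.symm)⟩
  · obtain ⟨a, rfl⟩ := Ideal.Quotient.mk_surjective y
    obtain ⟨b, hb⟩ := hdvd a
    exact ⟨Ideal.Quotient.mk _ b, (Ideal.Quotient.eq.mpr (Ideal.mem_span_singleton.mpr hb)).symm⟩

end IsAnalyticIsoAlong

namespace IsAnalyticIsoAlong

variable {R : Type*} [CommRing R] {S : Subring R} {h : S}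

theorem mem_of_mul_mem (hSR : IsAnalyticIsoAlong S.subtype h) {c : R} (hc : (h : R) * c ∈ S) :
    c ∈ S := by
  obtain ⟨-, hR, hinj, -⟩ := isAnalyticIsoAlong_iff.mp hSR
  obtain ⟨s, hs⟩ := hinj ⟨_, hc⟩ (dvd_mul_right _ _)
  have hcs : c = s := (mul_cancel_left_mem_nonZeroDivisors hR).mp (congrArg Subtype.val hs)
  exact hcs ▸ s.2

theorem exists_eq_add_mul (hSR : IsAnalyticIsoAlong S.subtype h) (a : R) :
    ∃ s ∈ S, ∃ c, a = s + h * c := by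
  obtain ⟨-, -, -, hsurj⟩ := isAnalyticIsoAlong_iff.mp hSR
  obtain ⟨s, c, hc⟩ := hsurj a
  exact ⟨s, s.2, c, sub_eq_iff_eq_add'.mp hc⟩

end IsAnalyticIsoAlong

namespace LaurentPolynomial

variable {R : Type*} [CommRing R]

theorem coeff_C_mul (a : R) (p : R[T;T⁻¹]) (n : ℤ) : (C a * p).coeff n = a * p.coeff n := by
  rw [← smul_eq_C_mul]
  rfl

theorem C_mul_single (a b : R) (n : ℤ) :
    C a * AddMonoidAlgebra.single n b = AddMonoidAlgebra.single n (a * b) := by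
  rw [← smul_eq_C_mul, AddMonoidAlgebra.smul_single']

theorem C_mem_nonZeroDivisors {a : R} (ha : a ∈ R⁰) : C a ∈ R[T;T⁻¹]⁰ :=
  mem_nonZeroDivisors_iff_right.mpr fun p hp ↦ LaurentPolynomial.ext fun n ↦
    (mul_left_mem_nonZeroDivisors_eq_zero_iff ha).mp <| by rw [← coeff_C_mul, mul_comm, hp]; rfl

theorem forall_coeff_single {P : ℤ → R → Prop} (hP : ∀ m, P m 0) {n : ℤ} {a : R} (ha : P n a) :
    ∀ m, P m ((AddMonoidAlgebra.single n a : R[T;T⁻¹]).coeff m) := by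
  intro m
  rw [AddMonoidAlgebra.coeff_single, Finsupp.single_apply]
  split_ifs with hnm
  · exact hnm ▸ ha
  · exact hP m

variable {I : Ideal R} {S : Subring R} {h : R}

theorem mem_of_C_mul_mem {TS : Set R[T;T⁻¹]}
    (hTS : ∀ p : R[T;T⁻¹], p ∈ TS ↔
      (∀ n : ℤ, 0 < n → p.coeff n ∈ I ^ n.toNat) ∧ ∀ n : ℤ, n ≤ 0 → p.coeff n ∈ S)
    (hS : ∀ c : R, h * c ∈ S → c ∈ S) {r : R[T;T⁻¹]}
    (hr : ∀ n : ℤ, 0 < n → r.coeff n ∈ I ^ n.toNat) (hhr : C h * r ∈ TS) : r ∈ TS :=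
  (hTS r).mpr ⟨hr, fun n hn ↦ hS _ (coeff_C_mul h r n ▸ ((hTS _).mp hhr).2 n hn)⟩

theorem exists_eq_add_C_mul_of_mem {TR TS : AddSubgroup R[T;T⁻¹]}
    (hTR : ∀ p : R[T;T⁻¹], p ∈ TR ↔ ∀ n : ℤ, 0 < n → p.coeff n ∈ I ^ n.toNat)
    (hTS : ∀ p : R[T;T⁻¹], p ∈ TS ↔
      (∀ n : ℤ, 0 < n → p.coeff n ∈ I ^ n.toNat) ∧ ∀ n : ℤ, n ≤ 0 → p.coeff n ∈ S)
    (hS : ∀ a : R, ∃ s ∈ S, ∃ c, a = s + h * c) {p : R[T;T⁻¹]} (hp : p ∈ TR) :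
    ∃ q ∈ TS, ∃ r ∈ TR, p = q + C h * r := by
  have single_mem_TR (n : ℤ) (a : R) (ha : 0 < n → a ∈ I ^ n.toNat) :
      AddMonoidAlgebra.single n a ∈ TR :=
    (hTR _).mpr (forall_coeff_single (P := fun n x ↦ 0 < n → x ∈ I ^ n.toNat)
      (fun _ _ ↦ zero_mem _) ha)
  have single_mem_TS (n : ℤ) (a : R) (ha : 0 < n → a ∈ I ^ n.toNat) (ha' : n ≤ 0 → a ∈ S) :
      AddMonoidAlgebra.single n a ∈ TS :=
    (hTS _).mpr ⟨forall_coeff_single (P := fun n x ↦ 0 < n → x ∈ I ^ n.toNat)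
      (fun _ _ ↦ zero_mem _) ha, forall_coeff_single (P := fun n x ↦ n ≤ 0 → x ∈ S)
      (fun _ _ ↦ zero_mem _) ha'⟩
  suffices p ∈ TS ⊔ TR.map (AddMonoidHom.mulLeft (C h)) by
    obtain ⟨q, hq, _, ⟨r, hr, rfl⟩, rfl⟩ := AddSubgroup.mem_sup.mp this
    exact ⟨q, hq, r, hr, rfl⟩
  rw [← AddMonoidAlgebra.sum_coeff_single p]
  refine sum_mem fun n _ ↦ ?_
  by_cases hn : 0 < n
  · exact AddSubgroup.mem_sup_left <|
      single_mem_TS n _ ((hTR p).mp hp n) fun hn' ↦ absurd hn (not_lt.mpr hn')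
  · obtain ⟨s, hs, c, hsc⟩ := hS (p.coeff n)
    rw [hsc, AddMonoidAlgebra.single_add, ← C_mul_single]
    exact add_mem (AddSubgroup.mem_sup_left (single_mem_TS n s (absurd · hn) fun _ ↦ hs))
      (AddSubgroup.mem_sup_right ⟨_, single_mem_TR n c (absurd · hn), rfl⟩)

end LaurentPolynomial

/-- Let `S ⊆ R` be a subring, `h ∈ S`, and suppose `S ↪ R` is an analytic isomorphism along
`h`.  Let `TR = R[It,t⁻¹]` be the extended Rees algebra: the subring of the Laurent
polynomial ring `R[t,t⁻¹]` of Laurent polynomials whose `n`-th coefficient lies in `Iⁿ` for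
all `n > 0`; and let `TS = S[It,t⁻¹]` be the subring of those whose `n`-th coefficient lies
in `Iⁿ` for `n > 0` and in `S` for `n ≤ 0`.  Then the inclusion `S[It,t⁻¹] ↪ R[It,t⁻¹]` is an
analytic isomorphism along the constant Laurent polynomial `h`. -/
theorem extendedReesAlgebra_analyticIso {R : Type*} [CommRing R] (I : Ideal R)
    (S : Subring R) (h : ↥S)
    (hSR : IsAnalyticIsoAlong S.subtype h)
    (TR : Subring (LaurentPolynomial R))
    (hTR : ∀ p : LaurentPolynomial R, p ∈ TR ↔ ∀ n : ℤ, 0 < n → AddMonoidAlgebra.coeff p n ∈ I ^ n.toNat)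
    (TS : Subring (LaurentPolynomial R))
    (hTS : ∀ p : LaurentPolynomial R, p ∈ TS ↔
      (∀ n : ℤ, 0 < n → AddMonoidAlgebra.coeff p n ∈ I ^ n.toNat) ∧ (∀ n : ℤ, n ≤ 0 → AddMonoidAlgebra.coeff p n ∈ S))
    (hle : TS ≤ TR)
    (hmem : LaurentPolynomial.C (h : R) ∈ TS) :
    IsAnalyticIsoAlong (Subring.inclusion hle) ⟨LaurentPolynomial.C (h : R), hmem⟩ := by
  obtain ⟨-, hh, -, -⟩ := isAnalyticIsoAlong_iff.mp hSR
  have hC : C (h : R) ∈ R[T;T⁻¹]⁰ := C_mem_nonZeroDivisors hh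
  refine isAnalyticIsoAlong_iff.mpr ⟨mem_nonZeroDivisors_of_injective TS.subtype_injective hC,
    mem_nonZeroDivisors_of_injective TR.subtype_injective hC, ?_, ?_⟩
  · rintro p ⟨r, hpr⟩
    replace hpr : (p : R[T;T⁻¹]) = C (h : R) * r := congrArg Subtype.val hpr
    have hr : (r : R[T;T⁻¹]) ∈ TS :=
      mem_of_C_mul_mem hTS (fun _ ↦ hSR.mem_of_mul_mem) ((hTR r).mp r.2) (hpr ▸ p.2)
    exact ⟨⟨r, hr⟩, Subtype.ext hpr⟩
  · rintro ⟨p, hp⟩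
    obtain ⟨q, hq, r, hr, rfl⟩ :=
      exists_eq_add_C_mul_of_mem (TR := TR.toAddSubgroup) (TS := TS.toAddSubgroup) hTR hTS
        hSR.exists_eq_add_mul hp
    exact ⟨⟨q, hq⟩, ⟨r, hr⟩, Subtype.ext (add_sub_cancel_left q _)⟩
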